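/- arXiv:1402.5884 — 2 statements merged into one kernel-verified Lean document; each statement's English description precedes it below -/
import Mathlib

section
/- Assume S_* ≠ ∅ and that ∇f is uniformly continuous on every bounded subset of H. Then the sequence (x^k)_{k∈ℕ} generated by Algorithm A1 converges weakly to some point of S_*. -/
open Filter
open scoped RealInnerProductSpace
open Topology

/-!
The Armijo rule makes the decrements `α_k ⟪∇f(x_k), x_k - P_C(z_k)⟫` summable, and together with
the projection inequality they make the iterates quasi-Fejér monotone with respect to the
minimizers: `‖x_{k+1} - s‖² ≤ ‖x_k - s‖² + 2 β̂ α_k ⟪∇f(x_k), x_k - P_C(z_k)⟫`. So `‖x_k - s‖`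
converges for every minimizer `s` and the iterates are bounded. The projected step
`x_k - P_C(z_k)` cannot stay away from `0`: otherwise `α_k → 0`, the rejected trial step `α_k / θ`
tends to `0` as well, and uniform continuity of `∇f` on bounded sets contradicts its rejection.
Hence `f(x_k)` decreases to `min_C f`; since `C` is weakly closed and `f` is weakly lower
semicontinuous, every weak cluster point is a minimizer, and Opial's lemma gives weak convergence.
-/

theorem ConvexOn.le_sub_of_tendsto_slope {E : Type*} [AddCommGroup E] [Module ℝ E]
    {s : Set E} {f : E → ℝ} (hf : ConvexOn ℝ s f) {a b : E} (ha : a ∈ s) (hb : b ∈ s) {L : ℝ}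
    (hL : Tendsto (fun t : ℝ => (f (a + t • (b - a)) - f a) / t) (𝓝[>] 0) (𝓝 L)) :
    L ≤ f b - f a := by
  refine le_of_tendsto hL ?_
  filter_upwards [Ioo_mem_nhdsGT (zero_lt_one' ℝ)] with t ⟨ht0, ht1⟩
  have hconv : f (t • b + (1 - t) • a) ≤ t * f b + (1 - t) * f a :=
    hf.2 hb ha ht0.le (by linarith) (by ring)
  rw [show a + t • (b - a) = t • b + (1 - t) • a by module, div_le_iff₀ ht0]
  linarith

theorem UniformContinuousOn.isBounded_image_closedBall {E F : Type*} [NormedAddCommGroup E]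
    [NormedSpace ℝ E] [SeminormedAddCommGroup F] {g : E → F} {R : ℝ}
    (hg : UniformContinuousOn g (Metric.closedBall 0 R)) :
    Bornology.IsBounded (g '' Metric.closedBall 0 R) := by
  obtain ⟨η, hη, hgη⟩ := Metric.uniformContinuousOn_iff.1 hg 1 one_pos
  obtain ⟨n, hn⟩ := exists_nat_gt (R / η)
  refine isBounded_iff_forall_norm_le.2 ⟨‖g 0‖ + n, ?_⟩
  rintro _ ⟨a, ha, rfl⟩
  rw [mem_closedBall_zero_iff] at ha
  have hn0 : (0 : ℝ) < n := (div_nonneg ((norm_nonneg a).trans ha) hη.le).trans_lt hn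
  set b : ℕ → E := fun i => ((i : ℝ) / n) • a
  have hb : ∀ i ≤ n, b i ∈ Metric.closedBall 0 R := fun i hi => by
    rw [mem_closedBall_zero_iff, norm_smul, Real.norm_of_nonneg (by positivity)]
    refine (mul_le_of_le_one_left (norm_nonneg a) ?_).trans ha
    exact div_le_one_of_le₀ (by exact_mod_cast hi) hn0.le
  have hstep : ∀ i < n, ‖g (b (i + 1)) - g (b i)‖ ≤ 1 := fun i hi => by
    refine (dist_eq_norm (g _) (g _) ▸ hgη _ (hb _ hi) _ (hb _ hi.le) ?_).le
    rw [dist_eq_norm, show b (i + 1) - b i = (1 / (n : ℝ)) • a by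
      simp only [b, ← sub_smul]; push_cast; ring_nf, norm_smul,
      Real.norm_of_nonneg (by positivity)]
    calc 1 / (n : ℝ) * ‖a‖ ≤ R / n := by rw [one_div_mul_eq_div]; gcongr
      _ < η := by rwa [div_lt_iff₀ hn0, mul_comm, ← div_lt_iff₀ hη]
  have htele : g a - g 0 = ∑ i ∈ Finset.range n, (g (b (i + 1)) - g (b i)) := by
    rw [Finset.sum_range_sub (fun i => g (b i))]
    simp [b, div_self hn0.ne']
  calc ‖g a‖ ≤ ‖g 0‖ + ‖g a - g 0‖ := by
        simpa using norm_add_le (g 0) (g a - g 0)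
    _ ≤ ‖g 0‖ + n := by
        gcongr
        rw [htele]
        refine (norm_sum_le _ _).trans ?_
        simpa using Finset.sum_le_sum fun i hi => hstep i (Finset.mem_range.1 hi)

theorem summable_of_succ_add_le {a e : ℕ → ℝ} {m : ℝ} (he : ∀ k, 0 ≤ e k)
    (hstep : ∀ k, a (k + 1) + e k ≤ a k) (hm : ∀ k, m ≤ a k) : Summable e := by
  refine summable_of_sum_range_le (c := a 0 - m) he fun n => ?_
  calc ∑ i ∈ Finset.range n, e i ≤ ∑ i ∈ Finset.range n, (a i - a (i + 1)) :=
        Finset.sum_le_sum fun i _ => by linarith [hstep i]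
    _ = a 0 - a n := Finset.sum_range_sub' a n
    _ ≤ a 0 - m := by linarith [hm n]

theorem exists_tendsto_of_succ_le_add_of_summable {a e : ℕ → ℝ} {m : ℝ} (he : ∀ k, 0 ≤ e k)
    (hsum : Summable e) (hstep : ∀ k, a (k + 1) ≤ a k + e k) (hm : ∀ k, m ≤ a k) :
    ∃ L, Tendsto a atTop (𝓝 L) := by
  set T : ℕ → ℝ := fun n => ∑' i, e (i + n)
  have hT : ∀ n, T n = e n + T (n + 1) := fun n => by
    simpa [T, add_comm, add_left_comm, add_assoc] using
      ((summable_nat_add_iff n).2 hsum).tsum_eq_zero_add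
  have hanti : Antitone fun n => a n + T n :=
    antitone_nat_of_succ_le fun k => by linarith [hstep k, hT k]
  have hbdd : BddBelow (Set.range fun n => a n + T n) :=
    ⟨m, by rintro _ ⟨n, rfl⟩; linarith [hm n, (tsum_nonneg fun i => he (i + n) : 0 ≤ T n)]⟩
  exact ⟨_, ((tendsto_atTop_ciInf hanti hbdd).sub (tendsto_sum_nat_add e)).congr fun n => by
    simp [T]⟩

section Weak

variable {H : Type*} [NormedAddCommGroup H] [InnerProductSpace ℝ H] {ι : Type*}

def TendstoWeakly (x : ι → H) (l : Filter ι) (p : H) : Prop :=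
  ∀ y, Tendsto (fun i => ⟪x i, y⟫) l (𝓝 ⟪p, y⟫)

theorem Ultrafilter.exists_tendstoWeakly_of_norm_le [CompleteSpace H] (U : Ultrafilter ι)
    {x : ι → H} {M : ℝ} (hM : ∀ i, ‖x i‖ ≤ M) : ∃ p, TendstoWeakly x U p := by
  have hbound : ∀ y i, |⟪x i, y⟫| ≤ M * ‖y‖ := fun y i =>
    (abs_real_inner_le_norm _ _).trans (mul_le_mul_of_nonneg_right (hM i) (norm_nonneg _))
  have hex : ∀ y, ∃ l, Tendsto (fun i => ⟪x i, y⟫) U (𝓝 l) := fun y => by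
    obtain ⟨l, -, hl⟩ := (isCompact_closedBall (0 : ℝ) (M * ‖y‖)).ultrafilter_le_nhds
      (U.map fun i => ⟪x i, y⟫) (by
        rw [le_principal_iff, Ultrafilter.coe_map]
        exact mem_map.2 (univ_mem' fun i => by simpa using hbound y i))
    exact ⟨l, by rwa [Ultrafilter.coe_map] at hl⟩
  choose l hl using hex
  let L : H →ₗ[ℝ] ℝ :=
    { toFun := l
      map_add' := fun y w => tendsto_nhds_unique (hl (y + w)) <| by
        simpa only [inner_add_right] using (hl y).add (hl w)
      map_smul' := fun c y => tendsto_nhds_unique (hl (c • y)) <| by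
        simpa only [real_inner_smul_right, smul_eq_mul, RingHom.id_apply] using
          (hl y).const_mul c }
  let L' : H →L[ℝ] ℝ := L.mkContinuous M fun y =>
    le_of_tendsto (hl y).norm (univ_mem' fun i => hbound y i)
  refine ⟨(InnerProductSpace.toDual ℝ H).symm L', fun y => ?_⟩
  rw [InnerProductSpace.toDual_symm_apply]
  exact hl y

theorem TendstoWeakly.eq_of_tendsto_norm_sub_sq {x : ι → H} {l U V : Filter ι} [U.NeBot]
    [V.NeBot] (hUl : U ≤ l) (hVl : V ≤ l) {p q : H} (hp : TendstoWeakly x U p)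
    (hq : TendstoWeakly x V q) {a b : ℝ} (ha : Tendsto (fun i => ‖x i - p‖ ^ 2) l (𝓝 a))
    (hb : Tendsto (fun i => ‖x i - q‖ ^ 2) l (𝓝 b)) : p = q := by
  have hpq : Tendsto (fun i => ⟪x i, p - q⟫) l (𝓝 ((b - a - ‖q‖ ^ 2 + ‖p‖ ^ 2) / 2)) := by
    have hid : ∀ i, ⟪x i, p - q⟫ = (‖x i - q‖ ^ 2 - ‖x i - p‖ ^ 2 - ‖q‖ ^ 2 + ‖p‖ ^ 2) / 2 :=
      fun i => by rw [inner_sub_right, norm_sub_sq_real, norm_sub_sq_real]; ring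
    simp_rw [hid]
    exact (((hb.sub ha).sub_const _).add_const _).div_const 2
  have h1 := tendsto_nhds_unique (hp (p - q)) (hpq.mono_left hUl)
  have h2 := tendsto_nhds_unique (hq (p - q)) (hpq.mono_left hVl)
  rw [← sub_eq_zero, ← inner_self_eq_zero (𝕜 := ℝ), inner_sub_left, h1, h2, sub_self]

theorem exists_norm_le_of_tendsto_norm_sub_sq {E : Type*} [SeminormedAddCommGroup E]
    {x : ℕ → E} {s : E} {L : ℝ}
    (h : Tendsto (fun k => ‖x k - s‖ ^ 2) atTop (𝓝 L)) : ∃ R, ∀ k, ‖x k‖ ≤ R := by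
  obtain ⟨B, hB⟩ := h.bddAbove_range
  refine ⟨‖s‖ + √B, fun k => ?_⟩
  have hk : ‖x k - s‖ ≤ √B := by
    simpa using Real.abs_le_sqrt (hB ⟨k, rfl⟩)
  calc ‖x k‖ = ‖s + (x k - s)‖ := by rw [add_sub_cancel]
    _ ≤ ‖s‖ + √B := (norm_add_le _ _).trans (by linarith)

/-- Opial's lemma, with weak cluster points taken along ultrafilters instead of subsequences. -/
theorem exists_tendstoWeakly_of_opial [CompleteSpace H] {x : ℕ → H} {S : Set H}
    (hne : S.Nonempty) (hconv : ∀ s ∈ S, ∃ L, Tendsto (fun k => ‖x k - s‖ ^ 2) atTop (𝓝 L))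
    (hcl : ∀ U : Ultrafilter ℕ, (U : Filter ℕ) ≤ atTop → ∀ q, TendstoWeakly x U q → q ∈ S) :
    ∃ p ∈ S, TendstoWeakly x atTop p := by
  obtain ⟨s, hs⟩ := hne
  obtain ⟨M, hM⟩ := exists_norm_le_of_tendsto_norm_sub_sq (hconv s hs).choose_spec
  obtain ⟨p, hp⟩ := (Ultrafilter.of (atTop : Filter ℕ)).exists_tendstoWeakly_of_norm_le hM
  have hpS := hcl _ (Ultrafilter.of_le _) p hp
  refine ⟨p, hpS, fun y => (tendsto_iff_ultrafilter _ _ _).2 fun V hV => ?_⟩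
  obtain ⟨q, hq⟩ := V.exists_tendstoWeakly_of_norm_le hM
  have hqS := hcl V hV q hq
  rw [← hq.eq_of_tendsto_norm_sub_sq hV (Ultrafilter.of_le _) hp (hconv q hqS).choose_spec
    (hconv p hpS).choose_spec]
  exact hq y

theorem TendstoWeakly.eq_of_forall_inner_sub_nonpos {C : Set H} {x : ι → H} {l : Filter ι}
    [l.NeBot] {p q : H} (hq : TendstoWeakly x l q) (hx : ∀ᶠ i in l, x i ∈ C)
    (hqp : ∀ w ∈ C, ⟪q - p, w - p⟫ ≤ 0) : q = p := by
  have hle : ⟪q, q - p⟫ ≤ ⟪p, q - p⟫ := by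
    refine le_of_tendsto (hq (q - p)) (hx.mono fun i hi => ?_)
    have := hqp _ hi
    rw [real_inner_comm, inner_sub_left] at this
    linarith
  rw [← sub_eq_zero, ← inner_self_eq_zero (𝕜 := ℝ)]
  refine le_antisymm ?_ real_inner_self_nonneg
  rw [inner_sub_left]
  linarith

theorem TendstoWeakly.le_of_tendsto {f : H → ℝ} {x : ι → H} {l : Filter ι} [l.NeBot] {q g : H}
    {F : ℝ} (hq : TendstoWeakly x l q) (hF : Tendsto (fun i => f (x i)) l (𝓝 F))
    (hsub : ∀ b, ⟪g, b - q⟫ ≤ f b - f q) : f q ≤ F := by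
  have hlim : Tendsto (fun i => f (x i) - (⟪x i, g⟫ - ⟪q, g⟫)) l (𝓝 (F - (⟪q, g⟫ - ⟪q, g⟫))) :=
    hF.sub ((hq g).sub_const _)
  have hle : ∀ i, f q ≤ f (x i) - (⟪x i, g⟫ - ⟪q, g⟫) := fun i => by
    have := hsub (x i)
    rw [inner_sub_right, real_inner_comm (x i), real_inner_comm q] at this
    linarith
  simpa using ge_of_tendsto hlim (Eventually.of_forall hle)

end Weak

section ProjectedStep

variable {H : Type*} [NormedAddCommGroup H] [InnerProductSpace ℝ H] {C : Set H} {x p g s : H}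
  {β : ℝ}

theorem norm_sub_sq_le_mul_inner_of_proj (hx : x ∈ C)
    (hp : ∀ w ∈ C, ⟪x - β • g - p, w - p⟫ ≤ 0) : ‖x - p‖ ^ 2 ≤ β * ⟪g, x - p⟫ := by
  have := hp x hx
  rw [sub_right_comm, inner_sub_left, real_inner_smul_left, real_inner_self_eq_norm_sq] at this
  linarith

theorem mul_inner_le_inner_of_proj (hs : s ∈ C) (hp : ∀ w ∈ C, ⟪x - β • g - p, w - p⟫ ≤ 0) :
    β * ⟪g, p - s⟫ ≤ ⟪x - p, p - s⟫ := by
  have := hp s hs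
  rw [sub_right_comm, ← neg_sub p s, inner_neg_right, inner_sub_left,
    real_inner_smul_left] at this
  linarith

theorem norm_convexComb_sub_sq_le (hs : s ∈ C) (hp : ∀ w ∈ C, ⟪x - β • g - p, w - p⟫ ≤ 0)
    (hgs : 0 ≤ ⟪g, x - s⟫) (hβ : 0 ≤ β) {α : ℝ} (hα₀ : 0 ≤ α) (hα₁ : α ≤ 1) :
    ‖α • p + (1 - α) • x - s‖ ^ 2 ≤ ‖x - s‖ ^ 2 + 2 * β * (α * ⟪g, x - p⟫) := by
  have hvi := mul_inner_le_inner_of_proj hs hp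
  have hsplit : x - s = (x - p) + (p - s) := by abel
  rw [hsplit, inner_add_right] at hgs
  have hβg : -(β * ⟪g, x - p⟫) ≤ β * ⟪g, p - s⟫ := by nlinarith
  rw [show α • p + (1 - α) • x - s = (x - s) - α • (x - p) by module, norm_sub_sq_real,
    real_inner_smul_right, norm_smul, Real.norm_of_nonneg hα₀, hsplit, inner_add_left,
    real_inner_self_eq_norm_sq, real_inner_comm (x - p) (p - s)]
  nlinarith [sq_nonneg ‖x - p‖, mul_nonneg hα₀ (sub_nonneg.2 hα₁)]

theorem sub_le_norm_mul_of_proj {f : H → ℝ} (hs : s ∈ C)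
    (hp : ∀ w ∈ C, ⟪x - β • g - p, w - p⟫ ≤ 0) (hβ : 0 < β) (hsub : ⟪g, s - x⟫ ≤ f s - f x) :
    f x - f s ≤ ‖x - p‖ * (‖g‖ + ‖p - s‖ / β) := by
  have hvi : ⟪g, p - s⟫ ≤ ‖x - p‖ * ‖p - s‖ / β := by
    rw [le_div_iff₀ hβ, mul_comm]
    exact (mul_inner_le_inner_of_proj hs hp).trans (real_inner_le_norm _ _)
  have hsplit : s - x = -((x - p) + (p - s)) := by abel
  rw [hsplit, inner_neg_right, inner_add_right] at hsub
  have := real_inner_le_norm g (x - p)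
  rw [mul_add, ← mul_div_assoc]
  linarith

theorem one_sub_mul_inner_lt_of_not_armijo {f : H → ℝ} {g' : H} {δ t : ℝ} (ht : 0 < t)
    (hfail : ¬ f (t • p + (1 - t) • x) ≤ f x - δ * t * ⟪g, x - p⟫)
    (hsub : ⟪g', x - (t • p + (1 - t) • x)⟫ ≤ f x - f (t • p + (1 - t) • x)) :
    (1 - δ) * ⟪g, x - p⟫ < ⟪g - g', x - p⟫ := by
  rw [show x - (t • p + (1 - t) • x) = t • (x - p) by module, real_inner_smul_right] at hsub
  have : t * ⟪g', x - p⟫ < t * (δ * ⟪g, x - p⟫) := by linarith [not_le.1 hfail]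
  rw [inner_sub_left]
  nlinarith [lt_of_mul_lt_mul_left this ht.le]

end ProjectedStep

structure IsArmijoProjGradSeq {H : Type*} [NormedAddCommGroup H] [InnerProductSpace ℝ H]
    (C : Set H) (f : H → ℝ) (gradf PC : H → H) (θ δ βlo βhi : ℝ) (β : ℕ → ℝ) (x z : ℕ → H)
    (α : ℕ → ℝ) (j : ℕ → ℕ) : Prop where
  theta_mem : θ ∈ Set.Ioo (0 : ℝ) 1
  delta_mem : δ ∈ Set.Ioo (0 : ℝ) 1
  betaLo_pos : 0 < βlo
  beta_mem : ∀ k, β k ∈ Set.Icc βlo βhi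
  start_mem : x 0 ∈ C
  z_eq : ∀ k, z k = x k - β k • gradf (x k)
  armijo : ∀ k, f (θ ^ j k • PC (z k) + (1 - θ ^ j k) • x k)
    ≤ f (x k) - δ * θ ^ j k * ⟪gradf (x k), x k - PC (z k)⟫
  armijo_min : ∀ k, ∀ i < j k, ¬ f (θ ^ i • PC (z k) + (1 - θ ^ i) • x k)
    ≤ f (x k) - δ * θ ^ i * ⟪gradf (x k), x k - PC (z k)⟫
  alpha_eq : ∀ k, α k = θ ^ j k
  step : ∀ k, x (k + 1) = α k • PC (z k) + (1 - α k) • x k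

namespace IsArmijoProjGradSeq

variable {H : Type*} [NormedAddCommGroup H] [InnerProductSpace ℝ H] {C : Set H} {f : H → ℝ}
  {gradf PC : H → H} {θ δ βlo βhi : ℝ} {β : ℕ → ℝ} {x z : ℕ → H} {α : ℕ → ℝ} {j : ℕ → ℕ}

theorem alpha_pos (A : IsArmijoProjGradSeq C f gradf PC θ δ βlo βhi β x z α j) (k : ℕ) :
    0 < α k :=
  A.alpha_eq k ▸ pow_pos A.theta_mem.1 _

theorem alpha_le_one (A : IsArmijoProjGradSeq C f gradf PC θ δ βlo βhi β x z α j) (k : ℕ) :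
    α k ≤ 1 :=
  A.alpha_eq k ▸ pow_le_one₀ A.theta_mem.1.le A.theta_mem.2.le

theorem beta_pos (A : IsArmijoProjGradSeq C f gradf PC θ δ βlo βhi β x z α j) (k : ℕ) :
    0 < β k :=
  A.betaLo_pos.trans_le (A.beta_mem k).1

theorem betaHi_pos (A : IsArmijoProjGradSeq C f gradf PC θ δ βlo βhi β x z α j) : 0 < βhi :=
  (A.beta_pos 0).trans_le (A.beta_mem 0).2

theorem mem (A : IsArmijoProjGradSeq C f gradf PC θ δ βlo βhi β x z α j) (hC : Convex ℝ C)
    (hPC : ∀ y, PC y ∈ C) (k : ℕ) : x k ∈ C := by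
  induction k with
  | zero => exact A.start_mem
  | succ k ih =>
    rw [A.step k]
    exact hC (hPC (z k)) ih (A.alpha_pos k).le (sub_nonneg.2 (A.alpha_le_one k)) (by ring)

theorem proj_inner_nonpos (A : IsArmijoProjGradSeq C f gradf PC θ δ βlo βhi β x z α j)
    (hPC : ∀ y, PC y ∈ C ∧ ∀ w ∈ C, ⟪y - PC y, w - PC y⟫ ≤ 0) (k : ℕ) :
    ∀ w ∈ C, ⟪x k - β k • gradf (x k) - PC (z k), w - PC (z k)⟫ ≤ 0 := by
  rw [← A.z_eq k]
  exact (hPC (z k)).2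

theorem norm_sub_sq_le (A : IsArmijoProjGradSeq C f gradf PC θ δ βlo βhi β x z α j)
    (hC : Convex ℝ C) (hPC : ∀ y, PC y ∈ C ∧ ∀ w ∈ C, ⟪y - PC y, w - PC y⟫ ≤ 0) (k : ℕ) :
    ‖x k - PC (z k)‖ ^ 2 ≤ β k * ⟪gradf (x k), x k - PC (z k)⟫ :=
  norm_sub_sq_le_mul_inner_of_proj (A.mem hC (fun y => (hPC y).1) k) (A.proj_inner_nonpos hPC k)

theorem inner_nonneg (A : IsArmijoProjGradSeq C f gradf PC θ δ βlo βhi β x z α j)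
    (hC : Convex ℝ C) (hPC : ∀ y, PC y ∈ C ∧ ∀ w ∈ C, ⟪y - PC y, w - PC y⟫ ≤ 0) (k : ℕ) :
    0 ≤ ⟪gradf (x k), x k - PC (z k)⟫ :=
  nonneg_of_mul_nonneg_right ((sq_nonneg _).trans (A.norm_sub_sq_le hC hPC k)) (A.beta_pos k)

theorem value_succ_le (A : IsArmijoProjGradSeq C f gradf PC θ δ βlo βhi β x z α j) (k : ℕ) :
    f (x (k + 1)) ≤ f (x k) - δ * (α k * ⟪gradf (x k), x k - PC (z k)⟫) := by
  rw [A.step k, A.alpha_eq k, ← mul_assoc]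
  exact A.armijo k

theorem summable (A : IsArmijoProjGradSeq C f gradf PC θ δ βlo βhi β x z α j)
    (hC : Convex ℝ C) (hPC : ∀ y, PC y ∈ C ∧ ∀ w ∈ C, ⟪y - PC y, w - PC y⟫ ≤ 0) {m : ℝ}
    (hm : ∀ k, m ≤ f (x k)) : Summable fun k => α k * ⟪gradf (x k), x k - PC (z k)⟫ := by
  have hδ := A.delta_mem.1
  refine (summable_of_succ_add_le (a := fun k => f (x k) / δ)
    (fun k => mul_nonneg (A.alpha_pos k).le (A.inner_nonneg hC hPC k)) (fun k => ?_)
    (fun k => div_le_div_of_nonneg_right (hm k) hδ.le))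
  rw [div_add' _ _ _ hδ.ne', div_le_div_iff_of_pos_right hδ]
  linarith [A.value_succ_le k]

theorem norm_succ_sub_sq_le (A : IsArmijoProjGradSeq C f gradf PC θ δ βlo βhi β x z α j)
    (hC : Convex ℝ C) (hPC : ∀ y, PC y ∈ C ∧ ∀ w ∈ C, ⟪y - PC y, w - PC y⟫ ≤ 0)
    (hsub : ∀ a b, ⟪gradf a, b - a⟫ ≤ f b - f a) {s : H} (hs : s ∈ C) {k : ℕ}
    (hfs : f s ≤ f (x k)) :
    ‖x (k + 1) - s‖ ^ 2 ≤ ‖x k - s‖ ^ 2 + 2 * βhi * (α k * ⟪gradf (x k), x k - PC (z k)⟫) := by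
  have hgs : 0 ≤ ⟪gradf (x k), x k - s⟫ := by
    have := hsub (x k) s
    rw [← neg_sub, inner_neg_right] at this
    linarith
  rw [A.step k]
  refine (norm_convexComb_sub_sq_le hs (A.proj_inner_nonpos hPC k) hgs (A.beta_pos k).le
    (A.alpha_pos k).le (A.alpha_le_one k)).trans ?_
  gcongr
  · exact mul_nonneg (A.alpha_pos k).le (A.inner_nonneg hC hPC k)
  · exact (A.beta_mem k).2

theorem exists_tendsto_norm_sub_sq (A : IsArmijoProjGradSeq C f gradf PC θ δ βlo βhi β x z α j)
    (hC : Convex ℝ C) (hPC : ∀ y, PC y ∈ C ∧ ∀ w ∈ C, ⟪y - PC y, w - PC y⟫ ≤ 0)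
    (hsub : ∀ a b, ⟪gradf a, b - a⟫ ≤ f b - f a) {s : H} (hs : s ∈ C)
    (hmin : ∀ y ∈ C, f s ≤ f y) : ∃ L, Tendsto (fun k => ‖x k - s‖ ^ 2) atTop (𝓝 L) := by
  have hfs : ∀ k, f s ≤ f (x k) := fun k => hmin _ (A.mem hC (fun y => (hPC y).1) k)
  exact exists_tendsto_of_succ_le_add_of_summable
    (fun k => mul_nonneg (by linarith [A.betaHi_pos])
      (mul_nonneg (A.alpha_pos k).le (A.inner_nonneg hC hPC k)))
    ((A.summable hC hPC hfs).mul_left _) (fun k => A.norm_succ_sub_sq_le hC hPC hsub hs (hfs k))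
    (fun k => sq_nonneg _)

theorem antitone_value (A : IsArmijoProjGradSeq C f gradf PC θ δ βlo βhi β x z α j)
    (hC : Convex ℝ C) (hPC : ∀ y, PC y ∈ C ∧ ∀ w ∈ C, ⟪y - PC y, w - PC y⟫ ≤ 0) :
    Antitone fun k => f (x k) :=
  antitone_nat_of_succ_le fun k => (A.value_succ_le k).trans <| sub_le_self _ <|
    mul_nonneg A.delta_mem.1.le (mul_nonneg (A.alpha_pos k).le (A.inner_nonneg hC hPC k))

theorem norm_sub_proj_le (A : IsArmijoProjGradSeq C f gradf PC θ δ βlo βhi β x z α j)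
    (hC : Convex ℝ C) (hPC : ∀ y, PC y ∈ C ∧ ∀ w ∈ C, ⟪y - PC y, w - PC y⟫ ≤ 0) {G : ℝ}
    {k : ℕ} (hG : ‖gradf (x k)‖ ≤ G) : ‖x k - PC (z k)‖ ≤ βhi * G := by
  have hsq := A.norm_sub_sq_le hC hPC k
  have hle : β k * ⟪gradf (x k), x k - PC (z k)⟫ ≤ βhi * G * ‖x k - PC (z k)‖ :=
    calc β k * ⟪gradf (x k), x k - PC (z k)⟫
        ≤ β k * (‖gradf (x k)‖ * ‖x k - PC (z k)‖) := by
          gcongr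
          · exact (A.beta_pos k).le
          · exact real_inner_le_norm _ _
      _ ≤ βhi * (G * ‖x k - PC (z k)‖) :=
          mul_le_mul (A.beta_mem k).2 (mul_le_mul_of_nonneg_right hG (norm_nonneg _))
            (by positivity) A.betaHi_pos.le
      _ = βhi * G * ‖x k - PC (z k)‖ := by ring
  have hc : 0 ≤ βhi * G := mul_nonneg A.betaHi_pos.le ((norm_nonneg _).trans hG)
  nlinarith [norm_nonneg (x k - PC (z k))]

theorem sq_div_le_inner (A : IsArmijoProjGradSeq C f gradf PC θ δ βlo βhi β x z α j)
    (hC : Convex ℝ C) (hPC : ∀ y, PC y ∈ C ∧ ∀ w ∈ C, ⟪y - PC y, w - PC y⟫ ≤ 0) {ε : ℝ}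
    (hε : 0 ≤ ε) {k : ℕ} (hv : ε ≤ ‖x k - PC (z k)‖) :
    ε ^ 2 / βhi ≤ ⟪gradf (x k), x k - PC (z k)⟫ := by
  rw [div_le_iff₀ A.betaHi_pos]
  calc ε ^ 2 ≤ ‖x k - PC (z k)‖ ^ 2 := by gcongr
    _ ≤ β k * ⟪gradf (x k), x k - PC (z k)⟫ := A.norm_sub_sq_le hC hPC k
    _ ≤ ⟪gradf (x k), x k - PC (z k)⟫ * βhi := by
        rw [mul_comm]
        exact mul_le_mul_of_nonneg_left (A.beta_mem k).2 (A.inner_nonneg hC hPC k)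

theorem tendsto_alpha_zero (A : IsArmijoProjGradSeq C f gradf PC θ δ βlo βhi β x z α j)
    (hsumm : Summable fun k => α k * ⟪gradf (x k), x k - PC (z k)⟫) {c : ℝ} (hc : 0 < c)
    (hγ : ∀ k, c ≤ ⟪gradf (x k), x k - PC (z k)⟫) : Tendsto α atTop (𝓝 0) := by
  refine squeeze_zero (fun k => (A.alpha_pos k).le) (fun k => ?_)
    (by simpa using hsumm.tendsto_atTop_zero.div_const c)
  rw [le_div_iff₀ hc]
  exact mul_le_mul_of_nonneg_left (hγ k) (A.alpha_pos k).le

theorem one_sub_mul_inner_lt (A : IsArmijoProjGradSeq C f gradf PC θ δ βlo βhi β x z α j)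
    (hsub : ∀ a b, ⟪gradf a, b - a⟫ ≤ f b - f a) {k : ℕ} (hj : j k ≠ 0) :
    (1 - δ) * ⟪gradf (x k), x k - PC (z k)⟫
      < ⟪gradf (x k) - gradf (x k - (α k / θ) • (x k - PC (z k))), x k - PC (z k)⟫ := by
  have ht : α k / θ = θ ^ (j k - 1) := by
    rw [A.alpha_eq k, div_eq_iff A.theta_mem.1.ne', ← pow_succ, Nat.sub_add_cancel
      (Nat.one_le_iff_ne_zero.2 hj)]
  rw [show x k - (α k / θ) • (x k - PC (z k))
      = θ ^ (j k - 1) • PC (z k) + (1 - θ ^ (j k - 1)) • x k by rw [ht]; module]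
  exact one_sub_mul_inner_lt_of_not_armijo (pow_pos A.theta_mem.1 _)
    (A.armijo_min k _ (Nat.sub_one_lt hj)) (hsub _ _)

theorem one_sub_mul_inner_lt_of_alpha_lt
    (A : IsArmijoProjGradSeq C f gradf PC θ δ βlo βhi β x z α j) (hC : Convex ℝ C)
    (hPC : ∀ y, PC y ∈ C ∧ ∀ w ∈ C, ⟪y - PC y, w - PC y⟫ ≤ 0)
    (hsub : ∀ a b, ⟪gradf a, b - a⟫ ≤ f b - f a) {R G : ℝ} (hR : ∀ k, ‖x k‖ ≤ R)
    (hG : ∀ k, ‖gradf (x k)‖ ≤ G) {η ε : ℝ}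
    (hUC : ∀ a ∈ Metric.closedBall 0 (R + βhi * G), ∀ b ∈ Metric.closedBall 0 (R + βhi * G),
      dist a b < η → dist (gradf a) (gradf b) < ε)
    {k : ℕ} (hkθ : α k < θ) (hkη : α k * (βhi * G + 1) < θ * η) :
    (1 - δ) * ⟪gradf (x k), x k - PC (z k)⟫ < ε * (βhi * G) := by
  obtain ⟨hθ₀, hθ₁⟩ := A.theta_mem
  set W := βhi * G
  have hvW : ‖x k - PC (z k)‖ ≤ W := A.norm_sub_proj_le hC hPC (hG k)
  have hW : 0 ≤ W := (norm_nonneg _).trans hvW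
  have hj : j k ≠ 0 := fun h => by
    rw [A.alpha_eq k, h, pow_zero] at hkθ
    linarith
  -- the rejected step size `α k / θ` is so small that the trial point stays `η`-close to `x k`
  set t := α k / θ
  have ht₀ : 0 ≤ t := div_nonneg (A.alpha_pos k).le hθ₀.le
  have ht₁ : t ≤ 1 := (div_le_one hθ₀).2 hkθ.le
  have htη : t * W < η :=
    calc t * W ≤ t * (W + 1) := by linarith [mul_nonneg ht₀ zero_le_one]
      _ = α k * (W + 1) / θ := div_mul_eq_mul_div _ _ _
      _ < η := (div_lt_iff₀' hθ₀).2 hkη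
  have hstep : ‖t • (x k - PC (z k))‖ ≤ t * W := by
    rw [norm_smul, Real.norm_of_nonneg ht₀]
    exact mul_le_mul_of_nonneg_left hvW ht₀
  have hx : x k ∈ Metric.closedBall 0 (R + W) := by
    rw [mem_closedBall_zero_iff]
    linarith [hR k]
  have hy : x k - t • (x k - PC (z k)) ∈ Metric.closedBall 0 (R + W) := by
    rw [mem_closedBall_zero_iff]
    nlinarith [norm_sub_le (x k) (t • (x k - PC (z k))), hR k, mul_le_mul_of_nonneg_right ht₁ hW]
  have hclose : ‖gradf (x k) - gradf (x k - t • (x k - PC (z k)))‖ < ε := by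
    rw [← dist_eq_norm]
    refine hUC _ hx _ hy ?_
    rw [dist_eq_norm, sub_sub_cancel]
    linarith
  calc (1 - δ) * ⟪gradf (x k), x k - PC (z k)⟫
      < ⟪gradf (x k) - gradf (x k - t • (x k - PC (z k))), x k - PC (z k)⟫ :=
        A.one_sub_mul_inner_lt hsub hj
    _ ≤ ‖gradf (x k) - gradf (x k - t • (x k - PC (z k)))‖ * ‖x k - PC (z k)‖ :=
        real_inner_le_norm _ _
    _ ≤ ε * W := mul_le_mul hclose.le hvW (norm_nonneg _) ((norm_nonneg _).trans hclose.le)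

theorem exists_norm_sub_proj_lt (A : IsArmijoProjGradSeq C f gradf PC θ δ βlo βhi β x z α j)
    (hC : Convex ℝ C) (hPC : ∀ y, PC y ∈ C ∧ ∀ w ∈ C, ⟪y - PC y, w - PC y⟫ ≤ 0)
    (hsub : ∀ a b, ⟪gradf a, b - a⟫ ≤ f b - f a) {R G : ℝ} (hR : ∀ k, ‖x k‖ ≤ R)
    (hG : ∀ k, ‖gradf (x k)‖ ≤ G)
    (hUC : UniformContinuousOn gradf (Metric.closedBall 0 (R + βhi * G)))
    (hsumm : Summable fun k => α k * ⟪gradf (x k), x k - PC (z k)⟫) {ε : ℝ} (hε : 0 < ε) :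
    ∃ k, ‖x k - PC (z k)‖ < ε := by
  by_contra! hv
  obtain ⟨hθ₀, -⟩ := A.theta_mem
  have hβ := A.betaHi_pos
  have hW : 0 ≤ βhi * G := (norm_nonneg _).trans (A.norm_sub_proj_le hC hPC (hG 0))
  have hγ : ∀ k, ε ^ 2 / βhi ≤ ⟪gradf (x k), x k - PC (z k)⟫ :=
    fun k => A.sq_div_le_inner hC hPC hε.le (hv k)
  set c := (1 - δ) * (ε ^ 2 / βhi)
  have hc : 0 < c := mul_pos (sub_pos.2 A.delta_mem.2) (by positivity)
  obtain ⟨η, hη, hUCη⟩ := Metric.uniformContinuousOn_iff.1 hUC (c / (βhi * G + 1)) (by positivity)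
  have hα := A.tendsto_alpha_zero hsumm (by positivity) hγ
  obtain ⟨k, hkθ, hkη⟩ := ((hα.eventually_lt_const hθ₀).and
    (hα.eventually_lt_const (by positivity : 0 < θ * η / (βhi * G + 1)))).exists
  have hlt := A.one_sub_mul_inner_lt_of_alpha_lt hC hPC hsub hR hG hUCη hkθ
    ((lt_div_iff₀ (by positivity)).1 hkη)
  have hcW : c / (βhi * G + 1) * (βhi * G) < c := by
    rw [div_mul_eq_mul_div, div_lt_iff₀ (by positivity)]
    nlinarith
  nlinarith [mul_le_mul_of_nonneg_left (hγ k) (sub_pos.2 A.delta_mem.2).le]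

theorem tendsto_value (A : IsArmijoProjGradSeq C f gradf PC θ δ βlo βhi β x z α j)
    (hC : Convex ℝ C) (hPC : ∀ y, PC y ∈ C ∧ ∀ w ∈ C, ⟪y - PC y, w - PC y⟫ ≤ 0)
    (hsub : ∀ a b, ⟪gradf a, b - a⟫ ≤ f b - f a)
    (hUC : ∀ r, UniformContinuousOn gradf (Metric.closedBall 0 r)) {s : H} (hs : s ∈ C)
    (hmin : ∀ y ∈ C, f s ≤ f y) : Tendsto (fun k => f (x k)) atTop (𝓝 (f s)) := by
  have hfs : ∀ k, f s ≤ f (x k) := fun k => hmin _ (A.mem hC (fun y => (hPC y).1) k)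
  obtain ⟨R, hR⟩ := exists_norm_le_of_tendsto_norm_sub_sq
    (A.exists_tendsto_norm_sub_sq hC hPC hsub hs hmin).choose_spec
  obtain ⟨G, hG⟩ := isBounded_iff_forall_norm_le.1 (hUC R).isBounded_image_closedBall
  replace hG : ∀ k, ‖gradf (x k)‖ ≤ G := fun k =>
    hG _ ⟨x k, mem_closedBall_zero_iff.2 (hR k), rfl⟩
  have hG₀ : 0 ≤ G := (norm_nonneg _).trans (hG 0)
  have hnum : 0 ≤ βhi * G + (R + ‖s‖) :=
    add_nonneg (mul_nonneg A.betaHi_pos.le hG₀) (add_nonneg ((norm_nonneg _).trans (hR 0))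
      (norm_nonneg _))
  set c := G + (βhi * G + (R + ‖s‖)) / βlo
  have hc : 0 ≤ c := add_nonneg hG₀ (div_nonneg hnum A.betaLo_pos.le)
  have hgap : ∀ k, f (x k) - f s ≤ ‖x k - PC (z k)‖ * c := fun k => by
    refine (sub_le_norm_mul_of_proj hs (A.proj_inner_nonpos hPC k) (A.beta_pos k)
      (hsub _ _)).trans (mul_le_mul_of_nonneg_left (add_le_add (hG k) ?_) (norm_nonneg _))
    refine div_le_div₀ hnum ?_ A.betaLo_pos (A.beta_mem k).1
    calc ‖PC (z k) - s‖ ≤ ‖x k - PC (z k)‖ + ‖x k - s‖ := by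
          simpa [norm_sub_rev] using norm_sub_le (PC (z k) - x k) (s - x k)
      _ ≤ βhi * G + (R + ‖s‖) :=
          add_le_add (A.norm_sub_proj_le hC hPC (hG k))
            ((norm_sub_le _ _).trans (by linarith [hR k]))
  refine tendsto_order.2 ⟨fun a ha => Eventually.of_forall fun k => ha.trans_le (hfs k),
    fun a ha => ?_⟩
  obtain ⟨k, hk⟩ := A.exists_norm_sub_proj_lt hC hPC hsub hR hG (hUC _)
    (A.summable hC hPC hfs) (div_pos (sub_pos.2 ha) (by linarith : 0 < c + 1))
  filter_upwards [eventually_ge_atTop k] with n hn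
  have : ‖x k - PC (z k)‖ * c < a - f s := by
    rw [lt_div_iff₀ (by linarith)] at hk
    nlinarith [norm_nonneg (x k - PC (z k))]
  linarith [A.antitone_value hC hPC hn, hgap k]

end IsArmijoProjGradSeq

theorem stmt_7_general
    {H : Type*} [NormedAddCommGroup H] [InnerProductSpace ℝ H] [CompleteSpace H]
    (C : Set H) (hCcv : Convex ℝ C)
    (f : H → ℝ) (hf : ConvexOn ℝ Set.univ f)
    (gradf : H → H)
    (hgrad : ∀ x d : H,
      Tendsto (fun t : ℝ => (f (x + t • d) - f x) / t) (nhdsWithin 0 (Set.Ioi 0))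
        (nhds ⟪gradf x, d⟫))
    (PC : H → H)
    (hPC : ∀ x : H, PC x ∈ C ∧ ∀ z ∈ C, ⟪x - PC x, z - PC x⟫ ≤ 0)
    (θ δ βlo βhi : ℝ)
    (hθ : θ ∈ Set.Ioo (0:ℝ) 1) (hδ : δ ∈ Set.Ioo (0:ℝ) 1)
    (hβlo : 0 < βlo)
    (β : ℕ → ℝ) (hβk : ∀ k, β k ∈ Set.Icc βlo βhi)
    (x z : ℕ → H) (α : ℕ → ℝ) (j : ℕ → ℕ)
    (hx0 : x 0 ∈ C)
    (hz : ∀ k, z k = x k - β k • gradf (x k))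
    (hjA : ∀ k, f ((θ ^ j k) • PC (z k) + (1 - θ ^ j k) • x k)
        ≤ f (x k) - δ * θ ^ j k * ⟪gradf (x k), x k - PC (z k)⟫)
    (hjmin : ∀ k, ∀ i < j k, ¬ (f ((θ ^ i) • PC (z k) + (1 - θ ^ i) • x k)
        ≤ f (x k) - δ * θ ^ i * ⟪gradf (x k), x k - PC (z k)⟫))
    (hα : ∀ k, α k = θ ^ j k)
    (hstep : ∀ k, x (k+1) = α k • PC (z k) + (1 - α k) • x k)
    (hS : ∃ xs ∈ C, ∀ y ∈ C, f xs ≤ f y)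
    (hUC : ∀ B : Set H, Bornology.IsBounded B → ∀ ε > 0, ∃ η > 0,
      ∀ a ∈ B, ∀ b ∈ B, ‖a - b‖ < η → ‖gradf a - gradf b‖ < ε)
    : ∃ p : H, (p ∈ C ∧ ∀ y ∈ C, f p ≤ f y) ∧
      ∀ y : H, Tendsto (fun k => ⟪x k, y⟫) atTop (nhds ⟪p, y⟫) := by
  have A : IsArmijoProjGradSeq C f gradf PC θ δ βlo βhi β x z α j :=
    ⟨hθ, hδ, hβlo, hβk, hx0, hz, hjA, hjmin, hα, hstep⟩
  have hsub : ∀ a b, ⟪gradf a, b - a⟫ ≤ f b - f a := fun a b =>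
    hf.le_sub_of_tendsto_slope (Set.mem_univ a) (Set.mem_univ b) (hgrad a (b - a))
  have hUC' : ∀ r, UniformContinuousOn gradf (Metric.closedBall 0 r) := fun r =>
    Metric.uniformContinuousOn_iff.2 <| by
      simpa only [dist_eq_norm] using hUC _ Metric.isBounded_closedBall
  obtain ⟨xs, hxsC, hxsmin⟩ := hS
  have hval := A.tendsto_value hCcv hPC hsub hUC' hxsC hxsmin
  refine exists_tendstoWeakly_of_opial ⟨xs, hxsC, hxsmin⟩
    (fun s hs => A.exists_tendsto_norm_sub_sq hCcv hPC hsub hs.1 hs.2) fun U hU q hq => ?_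
  have hqPC : q = PC q := hq.eq_of_forall_inner_sub_nonpos
    (Eventually.of_forall (A.mem hCcv fun y => (hPC y).1)) (hPC q).2
  exact ⟨hqPC ▸ (hPC q).1, fun y hy =>
    ((hq.le_of_tendsto (hval.mono_left hU) (hsub q)).trans (hxsmin y hy))⟩

theorem stmt_7
    {H : Type*} [NormedAddCommGroup H] [InnerProductSpace ℝ H] [CompleteSpace H]
    (C : Set H) (hCne : C.Nonempty) (hCcl : IsClosed C) (hCcv : Convex ℝ C)
    (f : H → ℝ) (hf : ConvexOn ℝ Set.univ f)
    (gradf : H → H)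
    (hgrad : ∀ x d : H,
      Tendsto (fun t : ℝ => (f (x + t • d) - f x) / t) (nhdsWithin 0 (Set.Ioi 0))
        (nhds ⟪gradf x, d⟫))
    (PC : H → H)
    (hPC : ∀ x : H, PC x ∈ C ∧ ∀ z ∈ C, ⟪x - PC x, z - PC x⟫ ≤ 0)
    (θ δ βlo βhi : ℝ)
    (hθ : θ ∈ Set.Ioo (0:ℝ) 1) (hδ : δ ∈ Set.Ioo (0:ℝ) 1)
    (hβlo : 0 < βlo) (hββ : βlo ≤ βhi)
    (β : ℕ → ℝ) (hβk : ∀ k, β k ∈ Set.Icc βlo βhi)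
    (x z : ℕ → H) (α : ℕ → ℝ) (j : ℕ → ℕ)
    (hx0 : x 0 ∈ C)
    (hz : ∀ k, z k = x k - β k • gradf (x k))
    (hjA : ∀ k, f ((θ ^ j k) • PC (z k) + (1 - θ ^ j k) • x k)
        ≤ f (x k) - δ * θ ^ j k * ⟪gradf (x k), x k - PC (z k)⟫)
    (hjmin : ∀ k, ∀ i < j k, ¬ (f ((θ ^ i) • PC (z k) + (1 - θ ^ i) • x k)
        ≤ f (x k) - δ * θ ^ i * ⟪gradf (x k), x k - PC (z k)⟫))
    (hα : ∀ k, α k = θ ^ j k)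
    (hstep : ∀ k, x (k+1) = α k • PC (z k) + (1 - α k) • x k)
    (hS : ∃ xs ∈ C, ∀ y ∈ C, f xs ≤ f y)
    (hUC : ∀ B : Set H, Bornology.IsBounded B → ∀ ε > 0, ∃ η > 0,
      ∀ a ∈ B, ∀ b ∈ B, ‖a - b‖ < η → ‖gradf a - gradf b‖ < ε)
    : ∃ p : H, (p ∈ C ∧ ∀ y ∈ C, f p ≤ f y) ∧
      ∀ y : H, Tendsto (fun k => ⟪x k, y⟫) atTop (nhds ⟪p, y⟫) :=
  stmt_7_general C hCcv f hf gradf hgrad PC hPC θ δ βlo βhi hθ hδ hβlo β hβk x z α j hx0 hz hjA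
    hjmin hα hstep hS hUC
end

section
/- Assume S_* ≠ ∅. Then the sequence (x^k)_{k∈ℕ} generated by Algorithm A2 satisfies lim_{k→∞} ‖x^{k+1} − x^k‖ = 0, and consequently lim_{k→∞} α_k ‖x^k − P_C(z^k)‖² = 0 whenever ∇f is bounded on bounded subsets of H. -/
/-!
Every iterate is the nearest point to `x⁰` of a convex set `C ∩ W_k ∩ H_k`, and a minimizer `x*`
of `f` over `C` lies in all of these sets: it lies in `H_k` because `f x* ≤ f^lev_k` and `f` lies
above its tangent planes, and in `W_{k+1}` by the variational inequality characterizing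
`x^{k+1}`. Hence `‖x^k - x⁰‖ ≤ ‖x* - x⁰‖`. Since `x^{k+1} ∈ W_k`, Pythagoras gives
`‖x^k - x⁰‖² + ‖x^{k+1} - x^k‖² ≤ ‖x^{k+1} - x⁰‖²`, so the squared steps are summable.
For the second claim, the Armijo condition and `x^{k+1} ∈ H_k` bound
`δ α_k ⟨∇f(x^k), x^k - P_C(z^k)⟩` by `‖∇f(x^k)‖ ‖x^{k+1} - x^k‖`, while the projection inequality
bounds `‖x^k - P_C(z^k)‖²` by `β_k ⟨∇f(x^k), x^k - P_C(z^k)⟩`.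
-/

open Filter Topology
open scoped RealInnerProductSpace

section Convexity

variable {E : Type*} [AddCommGroup E] [Module ℝ E]

theorem ConvexOn.le_sub_of_tendsto_slope_s13 {f : E → ℝ} (hf : ConvexOn ℝ Set.univ f) {x d : E}
    {g : ℝ} (hg : Tendsto (fun t : ℝ => (f (x + t • d) - f x) / t) (𝓝[>] 0) (𝓝 g)) :
    g ≤ f (x + d) - f x := by
  refine le_of_tendsto hg ?_
  filter_upwards [Ioo_mem_nhdsGT one_pos] with t ⟨ht0, ht1⟩
  have hconv := hf.2 (Set.mem_univ x) (Set.mem_univ (x + d)) (sub_nonneg.2 ht1.le) ht0.le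
    (sub_add_cancel 1 t)
  have hpt : (1 - t) • x + t • (x + d) = x + t • d := by module
  rw [hpt, smul_eq_mul, smul_eq_mul] at hconv
  rw [div_le_iff₀ ht0]
  linarith

end Convexity

section RunningMin

variable {g m : ℕ → ℝ}

theorem le_of_runningMin (h0 : m 0 = g 0) (hS : ∀ k, m (k + 1) = min (m k) (g (k + 1)))
    (k : ℕ) : m k ≤ g k := by
  cases k with
  | zero => exact h0.le
  | succ k => exact (hS k).trans_le (min_le_right _ _)

theorem runningMin_ge (h0 : m 0 = g 0) (hS : ∀ k, m (k + 1) = min (m k) (g (k + 1)))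
    {b : ℝ} (hb : ∀ k, b ≤ g k) (k : ℕ) : b ≤ m k := by
  induction k with
  | zero => exact h0 ▸ hb 0
  | succ k ih => exact (hS k) ▸ le_min ih (hb (k + 1))

end RunningMin

section InnerProductSpace

variable {H : Type*} [NormedAddCommGroup H] [InnerProductSpace ℝ H]

theorem convex_setOf_inner_sub_le (g a : H) (c : ℝ) : Convex ℝ {y : H | ⟪g, y - a⟫ ≤ c} := by
  have hset : {y : H | ⟪g, y - a⟫ ≤ c} = {y | ⟪g, y⟫ ≤ c + ⟪g, a⟫} := by
    ext y
    simp only [Set.mem_ofPred_eq, inner_sub_right, sub_le_iff_le_add']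
    rw [add_comm]
  rw [hset]
  exact convex_halfSpace_le ⟨inner_add_right g, fun r y => real_inner_smul_right g y r⟩ _

theorem Convex.inner_sub_le_zero_of_forall_norm_sub_le {K : Set H} (hK : Convex ℝ K)
    {p u w : H} (hp : p ∈ K) (hmin : ∀ y ∈ K, ‖p - u‖ ≤ ‖y - u‖) (hw : w ∈ K) :
    ⟪w - p, u - p⟫ ≤ 0 := by
  have : Nonempty K := ⟨⟨p, hp⟩⟩
  have hinf : ‖u - p‖ = ⨅ y : K, ‖u - y‖ := by
    refine le_antisymm (le_ciInf fun y => ?_) (ciInf_le (f := fun y : K => ‖u - y‖) ⟨0, ?_⟩ ⟨p, hp⟩)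
    · rw [norm_sub_rev, norm_sub_rev u]
      exact hmin y y.2
    · rintro r ⟨y, rfl⟩
      exact norm_nonneg _
  rw [real_inner_comm]
  exact (norm_eq_iInf_iff_real_inner_le_zero hK hp).1 hinf w hw

theorem norm_sub_sq_add_norm_sub_sq_le {a b c : H} (h : ⟪b - a, c - a⟫ ≤ 0) :
    ‖a - c‖ ^ 2 + ‖b - a‖ ^ 2 ≤ ‖b - c‖ ^ 2 := by
  have hsplit : b - c = (b - a) - (c - a) := by abel
  rw [hsplit, norm_sub_sq_real (b - a) (c - a), norm_sub_rev a c]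
  linarith

theorem mem_of_nearest_iterates {K : ℕ → Set H} {x : ℕ → H} {s : H}
    (hK : ∀ k, Convex ℝ (K k)) (hxK : ∀ k, x (k + 1) ∈ K k)
    (hmin : ∀ k, ∀ y ∈ K k, ‖x (k + 1) - x 0‖ ≤ ‖y - x 0‖)
    (hs : ∀ k, ⟪s - x k, x 0 - x k⟫ ≤ 0 → s ∈ K k) (k : ℕ) : s ∈ K k := by
  induction k with
  | zero => exact hs 0 (by simp)
  | succ k ih =>
    exact hs (k + 1) ((hK k).inner_sub_le_zero_of_forall_norm_sub_le (hxK k) (hmin k) ih)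

theorem norm_sub_le_of_nearest_iterates {C : Set H} (hC : Convex ℝ C) {x g : ℕ → H}
    {a b : ℕ → ℝ}
    (hstep : ∀ k,
      (x (k + 1) ∈ C ∧ ⟪x (k + 1) - x k, x 0 - x k⟫ ≤ 0 ∧ ⟪g k, x (k + 1) - x k⟫ + a k - b k ≤ 0) ∧
      ∀ y ∈ C, ⟪y - x k, x 0 - x k⟫ ≤ 0 → ⟪g k, y - x k⟫ + a k - b k ≤ 0 →
        ‖x (k + 1) - x 0‖ ≤ ‖y - x 0‖)
    {s : H} (hsC : s ∈ C) (hsH : ∀ k, ⟪g k, s - x k⟫ + a k - b k ≤ 0) (k : ℕ) :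
    ‖x k - x 0‖ ≤ ‖s - x 0‖ := by
  let K : ℕ → Set H := fun k =>
    C ∩ {y | ⟪x 0 - x k, y - x k⟫ ≤ 0} ∩ {y | ⟪g k, y - x k⟫ ≤ b k - a k}
  have hK : ∀ k y, y ∈ K k ↔
      y ∈ C ∧ ⟪y - x k, x 0 - x k⟫ ≤ 0 ∧ ⟪g k, y - x k⟫ + a k - b k ≤ 0 := fun k y => by
    simp only [K, Set.mem_inter_iff, Set.mem_ofPred_eq, real_inner_comm (x 0 - x k), and_assoc]
    constructor <;> rintro ⟨h1, h2, h3⟩ <;> exact ⟨h1, h2, by linarith⟩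
  have hsK : ∀ k, s ∈ K k := mem_of_nearest_iterates
    (fun k => (hC.inter (convex_setOf_inner_sub_le _ _ _)).inter (convex_setOf_inner_sub_le _ _ _))
    (fun k => (hK k _).2 (hstep k).1)
    (fun k y hy => let ⟨hyC, hyW, hyH⟩ := (hK k y).1 hy; (hstep k).2 y hyC hyW hyH)
    fun k hW => (hK k s).2 ⟨hsC, hW, hsH k⟩
  cases k with
  | zero => simp
  | succ k =>
    obtain ⟨hC, hW, hH⟩ := (hK k s).1 (hsK k)
    exact (hstep k).2 s hC hW hH

theorem tendsto_norm_sub_of_inner_le_zero {x : ℕ → H} {R : ℝ}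
    (hW : ∀ k, ⟪x (k + 1) - x k, x 0 - x k⟫ ≤ 0) (hR : ∀ k, ‖x k - x 0‖ ≤ R) :
    Tendsto (fun k => ‖x (k + 1) - x k‖) atTop (𝓝 0) := by
  have hpartial : ∀ n, ∑ i ∈ Finset.range n, ‖x (i + 1) - x i‖ ^ 2 ≤ ‖x n - x 0‖ ^ 2 := by
    intro n
    induction n with
    | zero => simp
    | succ n ih =>
      rw [Finset.sum_range_succ]
      linarith [norm_sub_sq_add_norm_sub_sq_le (hW n)]
  have hsum : Summable fun k => ‖x (k + 1) - x k‖ ^ 2 :=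
    summable_of_sum_range_le (fun _ => sq_nonneg _) fun n =>
      (hpartial n).trans (pow_le_pow_left₀ (norm_nonneg _) (hR n) 2)
  simpa using hsum.tendsto_atTop_zero.sqrt

theorem mul_norm_sub_sq_le_of_armijo {x x' z p g : H} {α β βhi δ fx fy lev : ℝ}
    (hα : 0 ≤ α) (hδ : 0 < δ) (hβ : 0 < β) (hβhi : β ≤ βhi)
    (hz : z = x - β • g) (hproj : ⟪z - p, x - p⟫ ≤ 0) (harmijo : fy ≤ fx - δ * α * ⟪g, x - p⟫)
    (hlev : lev ≤ fy) (hcut : ⟪g, x' - x⟫ + fx - lev ≤ 0) :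
    α * ‖x - p‖ ^ 2 ≤ βhi / δ * (‖g‖ * ‖x' - x‖) := by
  have hres : ‖x - p‖ ^ 2 ≤ β * ⟪g, x - p⟫ := by
    rw [hz, sub_right_comm, inner_sub_left, real_inner_smul_left, real_inner_self_eq_norm_sq]
      at hproj
    linarith
  have hdir : 0 ≤ ⟪g, x - p⟫ := by nlinarith [sq_nonneg ‖x - p‖]
  have hdesc : δ * (α * ⟪g, x - p⟫) ≤ ‖g‖ * ‖x' - x‖ := by
    have hcs := neg_le_of_abs_le (abs_real_inner_le_norm g (x' - x))
    linarith
  rw [div_mul_eq_mul_div, le_div_iff₀ hδ]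
  calc α * ‖x - p‖ ^ 2 * δ = (α * δ) * ‖x - p‖ ^ 2 := by ring
    _ ≤ (α * δ) * (β * ⟪g, x - p⟫) := by gcongr
    _ = β * (δ * (α * ⟪g, x - p⟫)) := by ring
    _ ≤ βhi * (‖g‖ * ‖x' - x‖) :=
      mul_le_mul hβhi hdesc (mul_nonneg hδ.le (mul_nonneg hα hdir)) (hβ.le.trans hβhi)

end InnerProductSpace

theorem stmt_13_general
    {H : Type*} [NormedAddCommGroup H] [InnerProductSpace ℝ H]
    (C : Set H) (hCcv : Convex ℝ C)
    (f : H → ℝ) (hf : ConvexOn ℝ Set.univ f)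
    (gradf : H → H)
    (hgrad : ∀ x d : H,
      Tendsto (fun t : ℝ => (f (x + t • d) - f x) / t) (nhdsWithin 0 (Set.Ioi 0))
        (nhds ⟪gradf x, d⟫))
    (PC : H → H)
    (hPC : ∀ x : H, PC x ∈ C ∧ ∀ z ∈ C, ⟪x - PC x, z - PC x⟫ ≤ 0)
    (θ δ βlo βhi : ℝ)
    (hθ : θ ∈ Set.Ioo (0:ℝ) 1) (hδ : δ ∈ Set.Ioo (0:ℝ) 1)
    (hβlo : 0 < βlo)
    (β : ℕ → ℝ) (hβk : ∀ k, β k ∈ Set.Icc βlo βhi)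
    (x z : ℕ → H) (α : ℕ → ℝ) (j : ℕ → ℕ)
    (hx0 : x 0 ∈ C)
    (hz : ∀ k, z k = x k - β k • gradf (x k))
    (hjA : ∀ k, f ((θ ^ j k) • PC (z k) + (1 - θ ^ j k) • x k)
        ≤ f (x k) - δ * θ ^ j k * ⟪gradf (x k), x k - PC (z k)⟫)
    (hα : ∀ k, α k = θ ^ j k)
    (flev : ℕ → ℝ)
    (hflev0 : flev 0 = f ((θ ^ j 0) • PC (z 0) + (1 - θ ^ j 0) • x 0))
    (hflevS : ∀ k, flev (k+1) =
        min (flev k) (f ((θ ^ j (k+1)) • PC (z (k+1)) + (1 - θ ^ j (k+1)) • x (k+1))))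
    (hstep : ∀ k,
      (x (k+1) ∈ C ∧ ⟪x (k+1) - x k, x 0 - x k⟫ ≤ 0 ∧
        ⟪gradf (x k), x (k+1) - x k⟫ + f (x k) - flev k ≤ 0) ∧
      ∀ y : H, y ∈ C → ⟪y - x k, x 0 - x k⟫ ≤ 0 →
        ⟪gradf (x k), y - x k⟫ + f (x k) - flev k ≤ 0 →
        ‖x (k+1) - x 0‖ ≤ ‖y - x 0‖)
    (hS : ∃ xs ∈ C, ∀ y ∈ C, f xs ≤ f y)
    : Tendsto (fun k => ‖x (k+1) - x k‖) atTop (nhds 0) ∧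
      ((∀ B : Set H, Bornology.IsBounded B → ∃ M : ℝ, ∀ y ∈ B, ‖gradf y‖ ≤ M) →
        Tendsto (fun k => α k * ‖x k - PC (z k)‖ ^ 2) atTop (nhds 0)) := by
  obtain ⟨xs, hxsC, hxsmin⟩ := hS
  have hxC : ∀ k, x k ∈ C := fun k => by
    cases k with
    | zero => exact hx0
    | succ k => exact (hstep k).1.1
  have hθpow : ∀ k, 0 < θ ^ j k ∧ θ ^ j k ≤ 1 := fun k =>
    ⟨pow_pos hθ.1 _, pow_le_one₀ hθ.1.le hθ.2.le⟩
  have hflev_ge : ∀ k, f xs ≤ flev k := runningMin_ge hflev0 hflevS fun k =>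
    hxsmin _ (hCcv (hPC (z k)).1 (hxC k) (hθpow k).1.le (sub_nonneg.2 (hθpow k).2) (by ring))
  have hflev_le := le_of_runningMin
    (g := fun k => f (θ ^ j k • PC (z k) + (1 - θ ^ j k) • x k)) hflev0 hflevS
  have hbound : ∀ k, ‖x k - x 0‖ ≤ ‖xs - x 0‖ :=
    norm_sub_le_of_nearest_iterates hCcv hstep hxsC fun k => by
      have htangent := hf.le_sub_of_tendsto_slope_s13 (hgrad (x k) (xs - x k))
      rw [add_sub_cancel] at htangent
      linarith [hflev_ge k]
  have hsteps := tendsto_norm_sub_of_inner_le_zero (fun k => (hstep k).1.2.1) hbound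
  refine ⟨hsteps, fun hB => ?_⟩
  obtain ⟨M, hM⟩ := hB (Metric.closedBall (x 0) ‖xs - x 0‖) Metric.isBounded_closedBall
  have hresidual : ∀ k, α k * ‖x k - PC (z k)‖ ^ 2 ≤ βhi / δ * (M * ‖x (k + 1) - x k‖) := fun k => by
    rw [hα k]
    refine (mul_norm_sub_sq_le_of_armijo (hθpow k).1.le hδ.1 (hβlo.trans_le (hβk k).1) (hβk k).2
      (hz k) ((hPC (z k)).2 (x k) (hxC k)) (hjA k) (hflev_le k)
      (hstep k).1.2.2).trans ?_
    gcongr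
    · exact div_nonneg (hβlo.le.trans ((hβk k).1.trans (hβk k).2)) hδ.1.le
    · exact hM _ (mem_closedBall_iff_norm.2 (hbound k))
  refine squeeze_zero (fun k => mul_nonneg ?_ (sq_nonneg _)) hresidual ?_
  · exact hα k ▸ (hθpow k).1.le
  · simpa using (hsteps.const_mul M).const_mul (βhi / δ)

theorem stmt_13
    {H : Type*} [NormedAddCommGroup H] [InnerProductSpace ℝ H] [CompleteSpace H]
    (C : Set H) (hCne : C.Nonempty) (hCcl : IsClosed C) (hCcv : Convex ℝ C)
    (f : H → ℝ) (hf : ConvexOn ℝ Set.univ f)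
    (gradf : H → H)
    (hgrad : ∀ x d : H,
      Tendsto (fun t : ℝ => (f (x + t • d) - f x) / t) (nhdsWithin 0 (Set.Ioi 0))
        (nhds ⟪gradf x, d⟫))
    (PC : H → H)
    (hPC : ∀ x : H, PC x ∈ C ∧ ∀ z ∈ C, ⟪x - PC x, z - PC x⟫ ≤ 0)
    (θ δ βlo βhi : ℝ)
    (hθ : θ ∈ Set.Ioo (0:ℝ) 1) (hδ : δ ∈ Set.Ioo (0:ℝ) 1)
    (hβlo : 0 < βlo) (hββ : βlo ≤ βhi)
    (β : ℕ → ℝ) (hβk : ∀ k, β k ∈ Set.Icc βlo βhi)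
    (x z : ℕ → H) (α : ℕ → ℝ) (j : ℕ → ℕ)
    (hx0 : x 0 ∈ C)
    (hz : ∀ k, z k = x k - β k • gradf (x k))
    (hjA : ∀ k, f ((θ ^ j k) • PC (z k) + (1 - θ ^ j k) • x k)
        ≤ f (x k) - δ * θ ^ j k * ⟪gradf (x k), x k - PC (z k)⟫)
    (hjmin : ∀ k, ∀ i < j k, ¬ (f ((θ ^ i) • PC (z k) + (1 - θ ^ i) • x k)
        ≤ f (x k) - δ * θ ^ i * ⟪gradf (x k), x k - PC (z k)⟫))
    (hα : ∀ k, α k = θ ^ j k)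
    (flev : ℕ → ℝ)
    (hflev0 : flev 0 = f ((θ ^ j 0) • PC (z 0) + (1 - θ ^ j 0) • x 0))
    (hflevS : ∀ k, flev (k+1) =
        min (flev k) (f ((θ ^ j (k+1)) • PC (z (k+1)) + (1 - θ ^ j (k+1)) • x (k+1))))
    (hstep : ∀ k,
      (x (k+1) ∈ C ∧ ⟪x (k+1) - x k, x 0 - x k⟫ ≤ 0 ∧
        ⟪gradf (x k), x (k+1) - x k⟫ + f (x k) - flev k ≤ 0) ∧
      ∀ y : H, y ∈ C → ⟪y - x k, x 0 - x k⟫ ≤ 0 →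
        ⟪gradf (x k), y - x k⟫ + f (x k) - flev k ≤ 0 →
        ‖x (k+1) - x 0‖ ≤ ‖y - x 0‖)
    (hS : ∃ xs ∈ C, ∀ y ∈ C, f xs ≤ f y)
    : Tendsto (fun k => ‖x (k+1) - x k‖) atTop (nhds 0) ∧
      ((∀ B : Set H, Bornology.IsBounded B → ∃ M : ℝ, ∀ y ∈ B, ‖gradf y‖ ≤ M) →
        Tendsto (fun k => α k * ‖x k - PC (z k)‖ ^ 2) atTop (nhds 0)) :=
  stmt_13_general C hCcv f hf gradf hgrad PC hPC θ δ βlo βhi hθ hδ hβlo β hβk x z α j hx0 hz hjA hα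
    flev hflev0 hflevS hstep hS
end
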